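/- (Theorem 3, sub-exponential e-process for the weak null.) Let c > 0. Suppose E[δ̂_t | 𝒢_{t−1}] = δ_t and |δ̂_t| ≤ c/2 a.s. for every t ≥ 1; let (γ_t)_{t≥1} be a [−c/2, c/2]-valued predictable process and set V̂_t = Σ_{i=1}^t (δ̂_i − γ_i)². Assume the weak one-sided null holds: Σ_{i=1}^t δ_i ≤ 0 a.s. for every t ≥ 1. Then for every λ ∈ [0, 1/c), the process E_t(λ) := exp( λ Σ_{i=1}^t δ̂_i − ψ_{E,c}(λ) V̂_t ) is an e-process: for every stopping time τ with respect to (𝒢_t) (setting E_∞(λ) := limsup_{t→∞} E_t(λ)), E[E_τ(λ)] ≤ 1. -/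

import Mathlib

open MeasureTheory Set Filter

/-- The sub-exponential cumulant generating function with scale `c`:
`ψ_{E,c}(λ) = c⁻²(−log(1−cλ) − cλ)` for `λ ∈ [0, 1/c)`. -/
noncomputable def psiE (c l : ℝ) : ℝ := (-Real.log (1 - c * l) - c * l) / c ^ 2

/-- The value of the process `E` at a possibly infinite (stopping) time `τ`, with
`E_∞ := limsup_{t → ∞} E_t`. -/
noncomputable def stoppedValueTop {Ω : Type*} (E : ℕ → Ω → ℝ) (τ : Ω → ℕ∞) (ω : Ω) : ℝ :=
  WithTop.recTopCoe (limsup (fun t => E t ω) atTop) (fun n => E n ω) (τ ω)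

/-!
With `ψ = psiE c l`, Fan's inequality `exp (l u - ψ u²) ≤ 1 + l u` for `u ≥ -c`, applied to
`u = δ̂_t - γ_t` together with `E[δ̂_t | 𝒢_{t-1}] = δ_t` and `1 + x ≤ eˣ`, makes
`M_t = exp (∑_{i ≤ t} l (δ̂_i - δ_i) - ψ (δ̂_i - γ_i)²)` a positive supermartingale with `M_0 = 1`.
Under the weak null `l ∑_{i ≤ t} δ_i ≤ 0`, so `E_t ≤ M_t`. The stopped supermartingale `M_{τ ∧ n}`
has expectation at most `1` and converges almost surely, and its limit dominates `E_τ` (also on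
`τ = ∞`, where `E_∞ = limsup E_t ≤ lim M_t`), so Fatou's lemma gives `E[E_τ] ≤ 1`.
-/

open Topology

theorem Real.hasSum_pow_div_neg_log_one_sub_sub {x : ℝ} (h : |x| < 1) :
    HasSum (fun n : ℕ => x ^ (n + 2) / (n + 2)) (-Real.log (1 - x) - x) := by
  have hlog := (hasSum_nat_add_iff' 1).2 (Real.hasSum_pow_div_log_of_abs_lt_one h)
  simp only [Finset.sum_range_one, Nat.cast_add, Nat.cast_one, zero_add, pow_one,
    Nat.cast_zero, div_one, add_assoc, one_add_one_eq_two] at hlog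
  exact hlog

theorem Real.sq_div_two_le_neg_log_one_sub_sub {s : ℝ} (hs0 : 0 ≤ s) (hs1 : s < 1) :
    s ^ 2 / 2 ≤ -Real.log (1 - s) - s := by
  have hsum := Real.hasSum_pow_div_neg_log_one_sub_sub (abs_lt.2 ⟨by linarith, hs1⟩)
  simpa using sum_le_hasSum {0} (fun n _ => by positivity) hsum

/-- That is, `x ↦ (-log (1 - x) - x) / x²` is monotone on `[0, 1)`. -/
theorem Real.sq_mul_neg_log_one_sub_sub_le {s v : ℝ} (hv : 0 ≤ v) (hvs : v ≤ s) (hs : s < 1) :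
    s ^ 2 * (-Real.log (1 - v) - v) ≤ v ^ 2 * (-Real.log (1 - s) - s) := by
  refine hasSum_le (fun n => ?_)
    ((Real.hasSum_pow_div_neg_log_one_sub_sub (abs_lt.2 ⟨by linarith, by linarith⟩)).mul_left _)
    ((Real.hasSum_pow_div_neg_log_one_sub_sub (abs_lt.2 ⟨by linarith, hs⟩)).mul_left _)
  have : v ^ n ≤ s ^ n := pow_le_pow_left₀ hv hvs n
  rw [mul_div_assoc', mul_div_assoc']
  refine div_le_div_of_nonneg_right ?_ (by positivity)
  calc s ^ 2 * v ^ (n + 2) = s ^ 2 * v ^ 2 * v ^ n := by ring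
    _ ≤ s ^ 2 * v ^ 2 * s ^ n := by gcongr
    _ = v ^ 2 * s ^ (n + 2) := by ring

theorem sq_div_two_le_psiE {c l : ℝ} (hc : 0 < c) (hl : 0 ≤ l) (hcl : c * l < 1) :
    l ^ 2 / 2 ≤ psiE c l := by
  rw [psiE, le_div_iff₀ (by positivity)]
  nlinarith [Real.sq_div_two_le_neg_log_one_sub_sub (by positivity) hcl]

/-- For `u ≥ 0` use `x - log (1 + x) ≤ x² / 2` and `l² / 2 ≤ psiE c l`; for `u ≤ 0` use the
monotonicity of `(-log (1 - x) - x) / x²` between `x = -l u` and `x = c l`. -/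
theorem mul_sub_log_one_add_mul_le_psiE_mul_sq {c l u : ℝ} (hc : 0 < c) (hl : 0 ≤ l)
    (hcl : c * l < 1) (hu : -c ≤ u) :
    l * u - Real.log (1 + l * u) ≤ psiE c l * u ^ 2 := by
  rcases le_total 0 u with hu0 | hu0
  · have hlu : 0 ≤ l * u := mul_nonneg hl hu0
    have hlog := Real.le_log_one_add_of_nonneg hlu
    have : l * u - l ^ 2 * u ^ 2 / 2 ≤ 2 * (l * u) / (l * u + 2) := by
      rw [le_div_iff₀ (by positivity)]
      nlinarith [pow_nonneg hlu 3]
    nlinarith [sq_div_two_le_psiE hc hl hcl, sq_nonneg u]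
  · rcases hl.eq_or_lt with rfl | hl0
    · simp [psiE]
    have key := Real.sq_mul_neg_log_one_sub_sub_le (s := c * l) (v := -(l * u))
      (by nlinarith) (by nlinarith) hcl
    rw [sub_neg_eq_add, sub_neg_eq_add] at key
    have hψ : -Real.log (1 - c * l) - c * l = c ^ 2 * psiE c l := by
      rw [psiE]; field_simp
    rw [hψ] at key
    have hcl0 : 0 < (c * l) ^ 2 := by positivity
    nlinarith

theorem exp_mul_sub_psiE_mul_sq_le {c l u : ℝ} (hc : 0 < c) (hl : 0 ≤ l) (hcl : c * l < 1)
    (hu : -c ≤ u) : Real.exp (l * u - psiE c l * u ^ 2) ≤ 1 + l * u := by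
  have hpos : 0 < 1 + l * u := by nlinarith
  calc Real.exp (l * u - psiE c l * u ^ 2) ≤ Real.exp (Real.log (1 + l * u)) := by
        gcongr
        linarith [mul_sub_log_one_add_mul_le_psiE_mul_sq hc hl hcl hu]
    _ = 1 + l * u := Real.exp_log hpos

section

variable {Ω : Type*} {m m0 : MeasurableSpace Ω} {P : Measure Ω}

theorem condExp_one_add_mul_sub_ae_eq [IsFiniteMeasure P] (hm : m ≤ m0) (l : ℝ) {X δ γ : Ω → ℝ}
    (hX : Integrable X P) (hγ : Measurable[m] γ) (hγ_int : Integrable γ P)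
    (hXδ : P[X|m] =ᵐ[P] δ) :
    P[fun ω => 1 + l * (X ω - γ ω)|m] =ᵐ[P] fun ω => 1 + l * (δ ω - γ ω) := by
  have hγ_cond : P[γ|m] = γ := condExp_of_stronglyMeasurable hm hγ.stronglyMeasurable hγ_int
  change P[(fun _ => (1 : ℝ)) + l • (X - γ)|m] =ᵐ[P] _
  filter_upwards [condExp_add (integrable_const 1) ((hX.sub hγ_int).smul l) m,
    condExp_smul l (X - γ) m, condExp_sub hX hγ_int m, hXδ] with ω h_add h_smul h_sub hω
  simp only [h_add, Pi.add_apply, h_smul, Pi.smul_apply, h_sub, Pi.sub_apply, hω, hγ_cond,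
    condExp_const hm, smul_eq_mul]

theorem condExp_exp_mul_sub_psiE_mul_sq_le_one [IsFiniteMeasure P] (hm : m ≤ m0)
    {c l : ℝ} (hc : 0 < c) (hl : 0 ≤ l) (hcl : c * l < 1) {X δ γ : Ω → ℝ}
    (hX : Integrable X P) (hδ : Measurable[m] δ) (hγ : Measurable[m] γ)
    (hδ_bdd : ∃ C, ∀ ω, |δ ω| ≤ C) (hγ_bdd : ∃ C, ∀ ω, |γ ω| ≤ C)
    (hXδ : P[X|m] =ᵐ[P] δ) (hXγ : ∀ᵐ ω ∂P, -c ≤ X ω - γ ω) :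
    P[fun ω => Real.exp (l * (X ω - δ ω) - psiE c l * (X ω - γ ω) ^ 2)|m] ≤ᵐ[P] 1 := by
  obtain ⟨Cδ, hCδ⟩ := hδ_bdd
  obtain ⟨Cγ, hCγ⟩ := hγ_bdd
  have hX_meas := hX.aestronglyMeasurable
  have hδ_meas : Measurable δ := hδ.mono hm le_rfl
  have hγ_meas : Measurable γ := hγ.mono hm le_rfl
  have hγ_int : Integrable γ P :=
    .of_bound hγ_meas.aestronglyMeasurable Cγ (ae_of_all _ hCγ)
  set A : Ω → ℝ := fun ω => Real.exp (l * (γ ω - δ ω)) with hA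
  have hA_meas : StronglyMeasurable[m] A := (by fun_prop : Measurable[m] A).stronglyMeasurable
  have hA_bdd : ∀ ω, ‖A ω‖ ≤ Real.exp (l * (Cγ + Cδ)) := fun ω => by
    rw [Real.norm_of_nonneg (Real.exp_nonneg _)]
    gcongr
    linarith [abs_le.1 (hCγ ω), abs_le.1 (hCδ ω)]
  have hY_int : Integrable (fun ω => 1 + l * (X ω - γ ω)) P :=
    (integrable_const 1).add ((hX.sub hγ_int).const_mul l)
  have hg_int : Integrable (fun ω => A ω * (1 + l * (X ω - γ ω))) P :=
    hY_int.bdd_mul (hA_meas.mono hm).aestronglyMeasurable (ae_of_all _ hA_bdd)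
  -- Fan's inequality at `u = X - γ`
  have hfg : (fun ω => Real.exp (l * (X ω - δ ω) - psiE c l * (X ω - γ ω) ^ 2))
      ≤ᵐ[P] fun ω => A ω * (1 + l * (X ω - γ ω)) := by
    filter_upwards [hXγ] with ω hω
    calc Real.exp (l * (X ω - δ ω) - psiE c l * (X ω - γ ω) ^ 2)
        = A ω * Real.exp (l * (X ω - γ ω) - psiE c l * (X ω - γ ω) ^ 2) := by
          rw [hA, ← Real.exp_add]; ring_nf
      _ ≤ A ω * (1 + l * (X ω - γ ω)) := by
          gcongr
          exact exp_mul_sub_psiE_mul_sq_le hc hl hcl hω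
  have hf_int : Integrable (fun ω => Real.exp (l * (X ω - δ ω) - psiE c l * (X ω - γ ω) ^ 2)) P :=
    hg_int.mono' (by fun_prop) (by
      filter_upwards [hfg] with ω hω
      rwa [Real.norm_of_nonneg (Real.exp_nonneg _)])
  have hg_cond : P[fun ω => A ω * (1 + l * (X ω - γ ω))|m]
      =ᵐ[P] fun ω => A ω * (1 + l * (δ ω - γ ω)) := by
    filter_upwards [condExp_mul_of_stronglyMeasurable_left hA_meas hg_int hY_int,
      condExp_one_add_mul_sub_ae_eq hm l hX hγ hγ_int hXδ] with ω h_mul h_lin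
    exact h_mul.trans (congrArg (A ω * ·) h_lin)
  filter_upwards [condExp_mono hf_int hg_int hfg, hg_cond] with ω h_mono h_eq
  calc _ ≤ A ω * (1 + l * (δ ω - γ ω)) := h_mono.trans_eq h_eq
    _ ≤ A ω * Real.exp (l * (δ ω - γ ω)) := by
        gcongr
        linarith [Real.add_one_le_exp (l * (δ ω - γ ω))]
    _ = 1 := by rw [hA, ← Real.exp_add]; ring_nf; exact Real.exp_zero

theorem supermartingale_exp_sum_of_condExp_exp_le_one [IsFiniteMeasure P] {𝒢 : Filtration ℕ m0}
    {D : ℕ → Ω → ℝ}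
    (hD : ∀ t, 1 ≤ t → Measurable[𝒢 t] (D t)) (hD_bdd : ∃ C, ∀ t ω, D t ω ≤ C)
    (hD_cond : ∀ t, P[fun ω => Real.exp (D (t + 1) ω)|𝒢 t] ≤ᵐ[P] 1) :
    Supermartingale (fun t ω => Real.exp (∑ i ∈ Finset.Icc 1 t, D i ω)) 𝒢 P := by
  obtain ⟨C, hC⟩ := hD_bdd
  set M : ℕ → Ω → ℝ := fun t ω => Real.exp (∑ i ∈ Finset.Icc 1 t, D i ω) with hM
  have hM_meas : ∀ t, Measurable[𝒢 t] (M t) := fun t => by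
    refine Measurable.exp (Finset.measurable_sum _ fun i hi => ?_)
    exact (hD i (Finset.mem_Icc.1 hi).1).mono (𝒢.mono (Finset.mem_Icc.1 hi).2) le_rfl
  have hM_succ : ∀ t, M (t + 1) = M t * fun ω => Real.exp (D (t + 1) ω) := fun t => by
    ext ω
    simp only [hM, Pi.mul_apply, Finset.sum_Icc_succ_top (Nat.le_add_left 1 t), Real.exp_add]
  have hexp_le : ∀ t ω, ‖Real.exp (D t ω)‖ ≤ Real.exp C := fun t ω => by
    rw [Real.norm_of_nonneg (Real.exp_nonneg _)]
    exact Real.exp_le_exp.2 (hC t ω)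
  have hexp_int : ∀ t, Integrable (fun ω => Real.exp (D (t + 1) ω)) P := fun t =>
    .of_bound (((hD (t + 1) le_add_self).mono (𝒢.le _) le_rfl).exp).aestronglyMeasurable
      (Real.exp C) (ae_of_all _ (hexp_le (t + 1)))
  have hM_int : ∀ t, Integrable (M t) P := by
    intro t
    induction t with
    | zero => simp [hM]
    | succ t ih =>
      rw [hM_succ]
      exact ih.mul_bdd (hexp_int t).aestronglyMeasurable (ae_of_all _ (hexp_le (t + 1)))
  refine supermartingale_nat (fun t => (hM_meas t).stronglyMeasurable) hM_int fun t => ?_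
  filter_upwards [condExp_mul_of_stronglyMeasurable_left (hM_meas t).stronglyMeasurable
    (hM_succ t ▸ hM_int (t + 1)) (hexp_int t), hD_cond t] with ω h_mul h_le
  rw [hM_succ, h_mul, Pi.mul_apply]
  exact mul_le_of_le_one_right (Real.exp_nonneg _) h_le

theorem integral_le_of_le_lim_of_integral_le {f : ℕ → Ω → ℝ} {g : Ω → ℝ} {C : ℝ}
    (hf_nonneg : ∀ n, 0 ≤ᵐ[P] f n) (hf_int : ∀ n, Integrable (f n) P)
    (hf_le : ∀ n, ∫ ω, f n ω ∂P ≤ C) (hg_nonneg : 0 ≤ᵐ[P] g)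
    (hg_le : ∀ᵐ ω ∂P, ∃ L, Tendsto (fun n => f n ω) atTop (𝓝 L) ∧ g ω ≤ L) :
    ∫ ω, g ω ∂P ≤ C := by
  have hC : 0 ≤ C := (integral_nonneg_of_ae (hf_nonneg 0)).trans (hf_le 0)
  by_cases hg_meas : AEStronglyMeasurable g P
  swap
  · rw [integral_undef fun h => hg_meas h.1]
    exact hC
  have hg_liminf : ∀ᵐ ω ∂P,
      ENNReal.ofReal (g ω) ≤ liminf (fun n => ENNReal.ofReal (f n ω)) atTop := by
    filter_upwards [hg_le] with ω ⟨L, hL, hgL⟩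
    have hL' : Tendsto (fun n => ENNReal.ofReal (f n ω)) atTop (𝓝 (ENNReal.ofReal L)) :=
      (ENNReal.continuous_ofReal.tendsto L).comp hL
    rw [hL'.liminf_eq]
    exact ENNReal.ofReal_le_ofReal hgL
  have hf_lintegral : ∀ n, ∫⁻ ω, ENNReal.ofReal (f n ω) ∂P ≤ ENNReal.ofReal C := fun n => by
    rw [← ofReal_integral_eq_lintegral_ofReal (hf_int n) (hf_nonneg n)]
    exact ENNReal.ofReal_le_ofReal (hf_le n)
  rw [integral_eq_lintegral_of_nonneg_ae hg_nonneg hg_meas, ← ENNReal.toReal_ofReal hC]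
  refine ENNReal.toReal_mono ENNReal.ofReal_ne_top ?_
  calc ∫⁻ ω, ENNReal.ofReal (g ω) ∂P
      ≤ ∫⁻ ω, liminf (fun n => ENNReal.ofReal (f n ω)) atTop ∂P := lintegral_mono_ae hg_liminf
    _ ≤ liminf (fun n => ∫⁻ ω, ENNReal.ofReal (f n ω) ∂P) atTop :=
        lintegral_liminf_le' fun n => (hf_int n).aemeasurable.ennreal_ofReal
    _ ≤ ENNReal.ofReal C := liminf_le_of_frequently_le' (Frequently.of_forall hf_lintegral)

section Supermartingale

variable {𝒢 : Filtration ℕ m0} {M E : ℕ → Ω → ℝ} {τ : Ω → ℕ∞}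

theorem MeasureTheory.Supermartingale.stoppedProcess [SigmaFiniteFiltration P 𝒢]
    (hM : Supermartingale M 𝒢 P) (hτ : IsStoppingTime 𝒢 τ) :
    Supermartingale (stoppedProcess M τ) 𝒢 P := by
  have hneg : MeasureTheory.stoppedProcess (-M) τ = -(MeasureTheory.stoppedProcess M τ) := rfl
  simpa [hneg] using (hM.neg.stoppedProcess hτ).neg

theorem MeasureTheory.Supermartingale.integral_le_integral_zero [SigmaFiniteFiltration P 𝒢]
    (hM : Supermartingale M 𝒢 P) (n : ℕ) : ∫ ω, M n ω ∂P ≤ ∫ ω, M 0 ω ∂P := by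
  simpa using hM.setIntegral_le (Nat.zero_le n) MeasurableSet.univ

theorem MeasureTheory.Supermartingale.exists_ae_tendsto_of_nonneg [IsFiniteMeasure P]
    (hM : Supermartingale M 𝒢 P) (hM_nonneg : 0 ≤ M) :
    ∀ᵐ ω ∂P, ∃ L, Tendsto (fun n => M n ω) atTop (𝓝 L) := by
  have hbdd : ∀ n, eLpNorm ((-M) n) 1 P ≤ Real.toNNReal (∫ ω, M 0 ω ∂P) := fun n => by
    rw [Pi.neg_apply, eLpNorm_neg, eLpNorm_one_eq_lintegral_enorm,
      ← ofReal_integral_norm_eq_lintegral_enorm (hM.integrable n)]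
    refine ENNReal.ofReal_le_ofReal ((le_of_eq (integral_congr_ae ?_)).trans
      (hM.integral_le_integral_zero n))
    exact ae_of_all _ fun ω => Real.norm_of_nonneg (hM_nonneg n ω)
  filter_upwards [hM.neg.exists_ae_tendsto_of_bdd hbdd] with ω ⟨L, hL⟩
  exact ⟨-L, by simpa using hL.neg⟩

theorem stoppedValueTop_mem_Icc_of_tendsto_stoppedProcess {ω : Ω} {L : ℝ}
    (hE_nonneg : ∀ t, 0 ≤ E t ω) (hEM : ∀ t, E t ω ≤ M t ω)
    (hL : Tendsto (fun n => stoppedProcess M τ n ω) atTop (𝓝 L)) :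
    stoppedValueTop E τ ω ∈ Icc 0 L := by
  cases hτ : τ ω using ENat.recTopCoe with
  | top =>
    have hM : Tendsto (fun n => M n ω) atTop (𝓝 L) :=
      hL.congr fun n => stoppedProcess_eq_of_le (hτ ▸ le_top)
    have hE_bdd : IsBoundedUnder (· ≤ ·) atTop fun t => E t ω :=
      hM.isBoundedUnder_le.mono_le (Eventually.of_forall hEM)
    rw [stoppedValueTop, hτ]
    refine ⟨le_limsup_of_frequently_le (Frequently.of_forall hE_nonneg) hE_bdd, ?_⟩
    exact (limsup_le_limsup (Eventually.of_forall hEM)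
      (isBoundedUnder_of ⟨0, hE_nonneg⟩).isCoboundedUnder_le hM.isBoundedUnder_le).trans
      hM.limsup_eq.le
  | coe k =>
    have hMτ : ∀ n ≥ k, stoppedProcess M τ n ω = M k ω := fun n hn =>
      (stoppedProcess_eq_of_ge (hτ ▸ WithTop.coe_le_coe.2 hn)).trans
        (congrArg (fun x : WithTop ℕ => M x.untopA ω) hτ)
    have hL_eq : L = M k ω := tendsto_nhds_unique hL (tendsto_atTop_of_eventually_const hMτ)
    rw [stoppedValueTop, hτ, hL_eq]
    exact ⟨hE_nonneg k, hEM k⟩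

theorem MeasureTheory.Supermartingale.integral_stoppedValueTop_le [IsFiniteMeasure P]
    (hM : Supermartingale M 𝒢 P) (hM_nonneg : 0 ≤ M) (hE_nonneg : 0 ≤ E)
    (hEM : ∀ᵐ ω ∂P, ∀ t, E t ω ≤ M t ω) (hτ : IsStoppingTime 𝒢 τ) :
    ∫ ω, stoppedValueTop E τ ω ∂P ≤ ∫ ω, M 0 ω ∂P := by
  set N := MeasureTheory.stoppedProcess M τ with hN
  have hN_super : Supermartingale N 𝒢 P := hM.stoppedProcess hτ
  have hN_nonneg : 0 ≤ N := fun n ω => hM_nonneg (min (n : WithTop ℕ) (τ ω)).untopA ω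
  have hN_zero : N 0 = M 0 := funext fun ω => stoppedProcess_eq_of_le (bot_le (a := τ ω))
  have hbounds : ∀ᵐ ω ∂P, ∃ L, Tendsto (fun n => N n ω) atTop (𝓝 L) ∧
      stoppedValueTop E τ ω ∈ Icc 0 L := by
    filter_upwards [hN_super.exists_ae_tendsto_of_nonneg hN_nonneg, hEM] with ω ⟨L, hL⟩ hEMω
    exact ⟨L, hL, stoppedValueTop_mem_Icc_of_tendsto_stoppedProcess (hE_nonneg · ω) hEMω hL⟩
  refine integral_le_of_le_lim_of_integral_le (fun n => ae_of_all _ (hN_nonneg n))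
    hN_super.integrable (fun n => hN_zero ▸ hN_super.integral_le_integral_zero n) ?_ ?_
  · filter_upwards [hbounds] with ω ⟨_, _, hω⟩ using hω.1
  · filter_upwards [hbounds] with ω ⟨L, hL, hω⟩ using ⟨L, hL, hω.2⟩

end Supermartingale

theorem supermartingale_exp_sum_mul_sub_psiE_mul_sq [IsFiniteMeasure P] {𝒢 : Filtration ℕ m0}
    {c l : ℝ} (hc : 0 < c) (hl : 0 ≤ l) (hcl : c * l < 1) {X δ γ : ℕ → Ω → ℝ}
    (hX : ∀ t, 1 ≤ t → Measurable[𝒢 t] (X t)) (hX_bdd : ∃ C, ∀ t ω, |X t ω| ≤ C)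
    (hδ : ∀ t, 1 ≤ t → Measurable[𝒢 (t - 1)] (δ t)) (hδ_bdd : ∃ C, ∀ t ω, |δ t ω| ≤ C)
    (hγ : ∀ t, 1 ≤ t → Measurable[𝒢 (t - 1)] (γ t)) (hγ_bdd : ∃ C, ∀ t ω, |γ t ω| ≤ C)
    (hXδ : ∀ t, 1 ≤ t → P[X t|𝒢 (t - 1)] =ᵐ[P] δ t)
    (hXγ : ∀ t, 1 ≤ t → ∀ᵐ ω ∂P, -c ≤ X t ω - γ t ω) :
    Supermartingale (fun t ω => Real.exp (∑ i ∈ Finset.Icc 1 t,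
      (l * (X i ω - δ i ω) - psiE c l * (X i ω - γ i ω) ^ 2))) 𝒢 P := by
  obtain ⟨CX, hCX⟩ := hX_bdd
  obtain ⟨Cδ, hCδ⟩ := hδ_bdd
  obtain ⟨Cγ, hCγ⟩ := hγ_bdd
  have hψ : 0 ≤ psiE c l := (by positivity : 0 ≤ l ^ 2 / 2).trans (sq_div_two_le_psiE hc hl hcl)
  refine supermartingale_exp_sum_of_condExp_exp_le_one (fun t ht => ?_)
    ⟨l * (CX + Cδ), fun t ω => ?_⟩ fun t => ?_
  · have hδt := (hδ t ht).mono (𝒢.mono (Nat.sub_le t 1)) le_rfl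
    have hγt := (hγ t ht).mono (𝒢.mono (Nat.sub_le t 1)) le_rfl
    have hXt := hX t ht
    fun_prop
  · have hXδ_le : X t ω - δ t ω ≤ CX + Cδ := by
      linarith [(abs_le.1 (hCX t ω)).2, (abs_le.1 (hCδ t ω)).1]
    nlinarith [mul_le_mul_of_nonneg_left hXδ_le hl, mul_nonneg hψ (sq_nonneg (X t ω - γ t ω))]
  · have hX_meas : Measurable (X (t + 1)) := (hX (t + 1) le_add_self).mono (𝒢.le _) le_rfl
    exact condExp_exp_mul_sub_psiE_mul_sq_le_one (𝒢.le t) hc hl hcl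
      (.of_bound hX_meas.aestronglyMeasurable CX (ae_of_all _ (hCX (t + 1))))
      (hδ (t + 1) le_add_self) (hγ (t + 1) le_add_self) ⟨Cδ, hCδ (t + 1)⟩ ⟨Cγ, hCγ (t + 1)⟩
      (hXδ (t + 1) le_add_self) (hXγ (t + 1) le_add_self)

end

/-- **Theorem 3 (sub-exponential e-process for the weak null).**
Let `c > 0`.  Suppose `E[δ̂_t | 𝒢_{t−1}] = δ_t` and `|δ̂_t| ≤ c/2` a.s. for every `t ≥ 1`;
let `(γ_t)_{t≥1}` be a `[−c/2, c/2]`-valued predictable process and set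
`V̂_t = Σ_{i=1}^t (δ̂_i − γ_i)²`.  Assume the weak one-sided null: `Σ_{i=1}^t δ_i ≤ 0`
a.s. for every `t ≥ 1`.  Then for every `λ ∈ [0, 1/c)`, the process
`E_t(λ) := exp(λ Σ_{i=1}^t δ̂_i − ψ_{E,c}(λ) V̂_t)` is an e-process: for every stopping time
`τ` w.r.t. `(𝒢_t)` (with `E_∞(λ) := limsup_{t→∞} E_t(λ)`), `E[E_τ(λ)] ≤ 1`. -/
theorem subexponential_eprocess_weak_null
    {Ω : Type*} {m0 : MeasurableSpace Ω} {P : Measure Ω} [IsProbabilityMeasure P]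
    (𝒢 : Filtration ℕ m0)
    (c : ℝ) (hc : 0 < c)
    (δhat δ γ : ℕ → Ω → ℝ)
    (hδhat_adapted : ∀ t : ℕ, 1 ≤ t → Measurable[𝒢 t] (δhat t))
    (hδhat_bdd : ∃ C : ℝ, ∀ t ω, |δhat t ω| ≤ C)
    (hδ_pred : ∀ t : ℕ, 1 ≤ t → Measurable[𝒢 (t - 1)] (δ t))
    (hδ_bdd : ∃ C : ℝ, ∀ t ω, |δ t ω| ≤ C)
    (hγ_pred : ∀ t : ℕ, 1 ≤ t → Measurable[𝒢 (t - 1)] (γ t))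
    (hγ_mem : ∀ t ω, γ t ω ∈ Icc (-(c / 2)) (c / 2))
    (hcond : ∀ t : ℕ, 1 ≤ t → P[δhat t | 𝒢 (t - 1)] =ᵐ[P] δ t)
    (habs : ∀ t : ℕ, 1 ≤ t → ∀ᵐ ω ∂P, |δhat t ω| ≤ c / 2)
    (hnull : ∀ t : ℕ, 1 ≤ t → ∀ᵐ ω ∂P, (∑ i ∈ Finset.Icc 1 t, δ i ω) ≤ 0)
    (l : ℝ) (hl : l ∈ Ico (0:ℝ) (1 / c)) :
    ∀ τ : Ω → ℕ∞, (∀ n : ℕ, MeasurableSet[𝒢 n] {ω | τ ω ≤ (n : ℕ∞)}) →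
      (∫ ω, stoppedValueTop
          (fun t ω => Real.exp
            (l * (∑ i ∈ Finset.Icc 1 t, δhat i ω)
              - psiE c l * ∑ i ∈ Finset.Icc 1 t, (δhat i ω - γ i ω) ^ 2))
          τ ω ∂P) ≤ 1 := by
  intro τ hτ
  have hcl : c * l < 1 := by rw [← lt_div_iff₀' hc]; exact hl.2
  have hM := supermartingale_exp_sum_mul_sub_psiE_mul_sq (P := P) hc hl.1 hcl hδhat_adapted
    hδhat_bdd hδ_pred hδ_bdd hγ_pred ⟨c / 2, fun t ω => abs_le.2 (hγ_mem t ω)⟩ hcond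
    fun t ht => by
      filter_upwards [habs t ht] with ω hω
      linarith [(abs_le.1 hω).1, (hγ_mem t ω).2]
  have hnull_all : ∀ᵐ ω ∂P, ∀ t, ∑ i ∈ Finset.Icc 1 t, δ i ω ≤ 0 := by
    refine ae_all_iff.2 fun t => ?_
    rcases Nat.eq_zero_or_pos t with rfl | ht
    · simp
    · exact hnull t ht
  refine (hM.integral_stoppedValueTop_le (fun _ _ => (Real.exp_pos _).le)
    (fun _ _ => (Real.exp_pos _).le) ?_ hτ).trans_eq (by simp)
  filter_upwards [hnull_all] with ω hω t
  gcongr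
  rw [Finset.sum_sub_distrib, ← Finset.mul_sum, ← Finset.mul_sum, Finset.sum_sub_distrib]
  nlinarith [mul_nonneg hl.1 (neg_nonneg.2 (hω t))]
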